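/- arXiv:1304.8075 — 6 statements merged into one kernel-verified Lean document; each statement's English description precedes it below -/
import Mathlib

section
/- Let ρ be a Hermitian 3×3 complex matrix. Then ρ is a density matrix (i.e., positive semidefinite with trace 1) if and only if Tr(ρ) = 1, Tr(ρ²) ≤ 1, and 3·Tr(ρ²) − 2·Tr(ρ³) ≤ 1. -/
/-!
Diagonalise ρ: its traces of powers are power sums of its real eigenvalues `a, b, c`. When
`a + b + c = 1`, Newton's identities give `a² + b² + c² = 1 - 2e₂` and
`3(a² + b² + c²) - 2(a³ + b³ + c³) = 1 - 6e₃`, so the two trace conditions say exactly that the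
elementary symmetric functions `e₂, e₃` are nonnegative. Reals with `e₁, e₂, e₃ ≥ 0` are
nonnegative, because they are the roots of `x³ - e₁x² + e₂x - e₃`, which is negative for `x < 0`.
-/

open ComplexOrder

lemma nonneg_of_esymm_nonneg {a b c : ℝ} (h₁ : 0 ≤ a + b + c) (h₂ : 0 ≤ a * b + b * c + c * a)
    (h₃ : 0 ≤ a * b * c) : 0 ≤ a := by
  have hroot : a ^ 3 - (a + b + c) * a ^ 2 + (a * b + b * c + c * a) * a - a * b * c = 0 := by
    ring
  by_contra! ha
  nlinarith [mul_nonneg h₁ (sq_nonneg a), mul_nonpos_of_nonneg_of_nonpos h₂ ha.le,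
    Odd.pow_neg (by decide : Odd 3) ha]

lemma nonneg_iff_of_add_add_eq_one {a b c : ℝ} (h : a + b + c = 1) :
    (0 ≤ a ∧ 0 ≤ b ∧ 0 ≤ c) ↔
      a ^ 2 + b ^ 2 + c ^ 2 ≤ 1 ∧ 3 * (a ^ 2 + b ^ 2 + c ^ 2) - 2 * (a ^ 3 + b ^ 3 + c ^ 3) ≤ 1 := by
  have hp₂ : a ^ 2 + b ^ 2 + c ^ 2 = 1 - 2 * (a * b + b * c + c * a) := by
    linear_combination (a + b + c + 1) * h
  have hp₃ : 3 * (a ^ 2 + b ^ 2 + c ^ 2) - 2 * (a ^ 3 + b ^ 3 + c ^ 3) = 1 - 6 * (a * b * c) := by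
    linear_combination (6 * (a * b + b * c + c * a) - (a + b + c - 1) * (2 * (a + b + c) + 1)) * h
  rw [hp₃, hp₂]
  constructor
  · rintro ⟨ha, hb, hc⟩
    constructor <;> nlinarith [mul_nonneg ha hb, mul_nonneg hb hc, mul_nonneg hc ha,
      mul_nonneg (mul_nonneg ha hb) hc]
  · rintro ⟨h₂, h₃⟩
    have h₁ : 0 ≤ a + b + c := by linarith
    exact ⟨nonneg_of_esymm_nonneg h₁ (by linarith) (by linarith),
      nonneg_of_esymm_nonneg (b := c) (c := a) (by linarith) (by linarith) (by linarith),
      nonneg_of_esymm_nonneg (b := a) (c := b) (by linarith) (by linarith) (by linarith)⟩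

namespace Matrix.IsHermitian

variable {n 𝕜 : Type*} [Fintype n] [DecidableEq n] [RCLike 𝕜] {A : Matrix n n 𝕜}

lemma trace_pow (hA : A.IsHermitian) (k : ℕ) :
    (A ^ k).trace = ∑ i, ((hA.eigenvalues i ^ k : ℝ) : 𝕜) := by
  conv_lhs => rw [hA.spectral_theorem, ← map_pow, diagonal_pow, Unitary.conjStarAlgAut_apply,
    trace_mul_cycle, Unitary.coe_star_mul_self, one_mul, trace_diagonal]
  simp

lemma re_trace_pow (hA : A.IsHermitian) (k : ℕ) :
    RCLike.re (A ^ k).trace = ∑ i, hA.eigenvalues i ^ k := by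
  simp [hA.trace_pow]

lemma trace_eq_one_iff (hA : A.IsHermitian) : A.trace = 1 ↔ ∑ i, hA.eigenvalues i = 1 := by
  rw [hA.trace_eq_sum_eigenvalues, ← RCLike.ofReal_sum, ← RCLike.ofReal_one, RCLike.ofReal_inj]

end Matrix.IsHermitian

/-- A Hermitian 3×3 complex matrix is a density matrix (positive semidefinite with
trace 1) if and only if Tr(ρ) = 1, Tr(ρ²) ≤ 1, and 3·Tr(ρ²) − 2·Tr(ρ³) ≤ 1. -/
theorem density_iff_trace_conditions
    (ρ : Matrix (Fin 3) (Fin 3) ℂ) (hρ : ρ.IsHermitian) :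
    (ρ.PosSemidef ∧ ρ.trace = 1) ↔
      (ρ.trace = 1 ∧ ((ρ ^ 2).trace).re ≤ 1 ∧
        3 * ((ρ ^ 2).trace).re - 2 * ((ρ ^ 3).trace).re ≤ 1) := by
  have hre (k : ℕ) : ((ρ ^ k).trace).re = ∑ i, hρ.eigenvalues i ^ k := hρ.re_trace_pow k
  rw [hρ.posSemidef_iff_eigenvalues_nonneg, hre, hre, hρ.trace_eq_one_iff]
  simp only [Fin.sum_univ_three]
  constructor
  · rintro ⟨hnonneg, hsum⟩
    exact ⟨hsum, (nonneg_iff_of_add_add_eq_one hsum).mp ⟨hnonneg 0, hnonneg 1, hnonneg 2⟩⟩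
  · rintro ⟨hsum, hpow⟩
    obtain ⟨h₀, h₁, h₂⟩ := (nonneg_iff_of_add_add_eq_one hsum).mpr hpow
    exact ⟨fun i ↦ by fin_cases i <;> assumption, hsum⟩
end

section
/- Let {Π_i}_{i=1}^{d²} be a SIC in dimension d ≥ 2, and let ρ be a Hermitian d×d complex matrix with Tr(ρ) = 1. Setting p(i) = Tr(ρΠ_i)/d, one has ρ = Σ_{i=1}^{d²} [(d+1)·p(i) − 1/d]·Π_i. -/
/-!
With respect to the trace form, the Gram matrix `((d δᵢⱼ + 1) / (d + 1))` of the `d²` matrices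
`Πᵢ` is invertible, so they are linearly independent and hence a basis of `M_d`: a matrix is
determined by its traces against the `Πᵢ`. Since `tr Πᵢ = 1`, this gives `∑ Πᵢ = d • 1`, and then
the coefficients `((d + 1) tr(ρ Πᵢ) - tr ρ) / d` are checked to reproduce every `tr(ρ Πⱼ)`.
-/

variable {K n ι : Type*} [Field K] [Fintype n] [DecidableEq ι]

def IsSICGram (d : ℕ) (P : ι → Matrix n n K) : Prop :=
  ∀ i j, (P i * P j).trace = ((d : K) * (if i = j then 1 else 0) + 1) / ((d : K) + 1)

namespace IsSICGram

variable {d : ℕ} {P : ι → Matrix n n K}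

theorem trace_eq_one [CharZero K] (hP : IsSICGram d P) {i : ι} (hi : P i * P i = P i) :
    (P i).trace = 1 := by
  have h := hP i i
  rw [hi, if_pos rfl, mul_one, div_self (Nat.cast_add_one_ne_zero d)] at h
  exact h

variable [Fintype ι]

theorem trace_sum_smul_mul (hP : IsSICGram d P) (b : ι → K) (j : ι) :
    ((∑ i, b i • P i) * P j).trace = (d * b j + ∑ i, b i) / (d + 1) := by
  calc ((∑ i, b i • P i) * P j).trace = ∑ i, b i * (P i * P j).trace := by
        simp only [Matrix.sum_mul, Matrix.trace_sum, Matrix.smul_mul, Matrix.trace_smul, smul_eq_mul]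
    _ = ∑ i, (d * (if i = j then b i else 0) + b i) / (d + 1) := by
        refine Finset.sum_congr rfl fun i _ => ?_
        rw [hP]
        split_ifs <;> ring
    _ = (d * b j + ∑ i, b i) / (d + 1) := by
        rw [← Finset.sum_div, Finset.sum_add_distrib, ← Finset.mul_sum, Finset.sum_ite_eq']
        simp

theorem eq_zero_of_forall_trace_sum_smul_mul_eq_zero [CharZero K] (hP : IsSICGram d P)
    (hd : d ≠ 0) {b : ι → K} (hb : ∀ j, ((∑ i, b i • P i) * P j).trace = 0) : b = 0 := by
  have hlin : ∀ j, (d : K) * b j + ∑ i, b i = 0 := fun j => by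
    simpa [hP.trace_sum_smul_mul, div_eq_zero_iff, Nat.cast_add_one_ne_zero] using hb j
  have hsum : ((d + Fintype.card ι : ℕ) : K) * ∑ i, b i = 0 := by
    rw [← Finset.sum_const_zero (s := (Finset.univ : Finset ι)), ← Finset.sum_congr rfl
      (fun j _ => hlin j)]
    simp [Finset.sum_add_distrib, ← Finset.mul_sum, add_mul]
  have hs : ∑ i, b i = 0 :=
    (mul_eq_zero.mp hsum).resolve_left (Nat.cast_ne_zero.mpr (by omega))
  funext j
  simpa [hs, hd] using hlin j

theorem linearIndependent [CharZero K] (hP : IsSICGram d P) (hd : d ≠ 0) :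
    LinearIndependent K P :=
  Fintype.linearIndependent_iff.mpr fun b hb =>
    congrFun (hP.eq_zero_of_forall_trace_sum_smul_mul_eq_zero hd fun j => by
      rw [hb, Matrix.zero_mul, Matrix.trace_zero])

theorem eq_of_forall_trace_mul_eq [CharZero K] (hP : IsSICGram d P) (hd : d ≠ 0)
    (hι : Fintype.card ι = Fintype.card n ^ 2) {A B : Matrix n n K}
    (h : ∀ j, (A * P j).trace = (B * P j).trace) : A = B := by
  have hspan : Submodule.span K (Set.range P) = ⊤ :=
    (hP.linearIndependent hd).span_eq_top_of_card_eq_finrank'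
      (by simp [hι, sq, Module.finrank_matrix])
  obtain ⟨b, hb⟩ := (Submodule.mem_span_range_iff_exists_fun K).mp
    (hspan ▸ Submodule.mem_top : A - B ∈ Submodule.span K (Set.range P))
  have hb0 : b = 0 := hP.eq_zero_of_forall_trace_sum_smul_mul_eq_zero hd fun j => by
    rw [hb, Matrix.sub_mul, Matrix.trace_sub, h, sub_self]
  rw [← sub_eq_zero, ← hb, hb0]
  simp

theorem sum_eq_smul_one [CharZero K] [DecidableEq n] (hP : IsSICGram d P) (hd : d ≠ 0)
    (hn : Fintype.card n = d) (hι : Fintype.card ι = d ^ 2) (hproj : ∀ i, P i * P i = P i) :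
    ∑ i, P i = (d : K) • 1 := by
  refine hP.eq_of_forall_trace_mul_eq hd (by rw [hι, hn]) fun j => ?_
  have h := hP.trace_sum_smul_mul (fun _ => 1) j
  simp only [one_smul, Finset.sum_const, Finset.card_univ, hι, nsmul_eq_mul, mul_one] at h
  rw [h, Matrix.smul_mul, Matrix.one_mul, Matrix.trace_smul, hP.trace_eq_one (hproj j),
    smul_eq_mul, mul_one, div_eq_iff (Nat.cast_add_one_ne_zero d)]
  push_cast
  ring

theorem sum_trace_mul [CharZero K] [DecidableEq n] (hP : IsSICGram d P) (hd : d ≠ 0)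
    (hn : Fintype.card n = d) (hι : Fintype.card ι = d ^ 2) (hproj : ∀ i, P i * P i = P i)
    (A : Matrix n n K) : ∑ i, (A * P i).trace = d * A.trace := by
  rw [← Matrix.trace_sum, ← Matrix.mul_sum, hP.sum_eq_smul_one hd hn hι hproj, Matrix.mul_smul,
    Matrix.mul_one, Matrix.trace_smul, smul_eq_mul]

theorem eq_sum_smul [CharZero K] [DecidableEq n] (hP : IsSICGram d P) (hd : d ≠ 0)
    (hn : Fintype.card n = d) (hι : Fintype.card ι = d ^ 2) (hproj : ∀ i, P i * P i = P i)
    (A : Matrix n n K) :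
    A = ∑ i, (((d + 1) * (A * P i).trace - A.trace) / d) • P i := by
  refine hP.eq_of_forall_trace_mul_eq hd (by rw [hι, hn]) fun j => ?_
  have hcoeff : ∑ i, ((d + 1) * (A * P i).trace - A.trace) / (d : K) = A.trace := by
    rw [← Finset.sum_div, Finset.sum_sub_distrib, ← Finset.mul_sum,
      hP.sum_trace_mul hd hn hι hproj, Finset.sum_const, Finset.card_univ, hι, nsmul_eq_mul]
    field_simp
    push_cast
    ring
  rw [hP.trace_sum_smul_mul, hcoeff]
  field_simp
  ring

end IsSICGram

theorem sic_representation_general (d : ℕ) (hd : 2 ≤ d)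
    (P : Fin (d ^ 2) → Matrix (Fin d) (Fin d) ℂ)
    (hproj : ∀ i, P i * P i = P i)
    (hsic : ∀ i j, (P i * P j).trace =
      ((d : ℂ) * (if i = j then 1 else 0) + 1) / ((d : ℂ) + 1))
    (ρ : Matrix (Fin d) (Fin d) ℂ) (htr : ρ.trace = 1)
    (p : Fin (d ^ 2) → ℝ) (hp : ∀ i, (p i : ℂ) = (ρ * P i).trace / d) :
    ρ = ∑ i, (((((d : ℝ) + 1) * p i - 1 / d) : ℝ) : ℂ) • P i := by
  have hP : IsSICGram d P := hsic
  refine (hP.eq_sum_smul (by omega) (Fintype.card_fin d) (Fintype.card_fin _) hproj ρ).trans ?_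
  refine Finset.sum_congr rfl fun i _ => congrArg (· • P i) ?_
  push_cast
  rw [htr, hp]
  field_simp

/-- For a SIC {Π_i} in dimension d ≥ 2 and a trace-one Hermitian matrix ρ with
SIC probabilities p(i) = Tr(ρΠ_i)/d, one has ρ = Σ_i [(d+1)p(i) − 1/d]·Π_i. -/
theorem sic_representation (d : ℕ) (hd : 2 ≤ d)
    (P : Fin (d ^ 2) → Matrix (Fin d) (Fin d) ℂ)
    (hherm : ∀ i, (P i).IsHermitian)
    (hproj : ∀ i, P i * P i = P i)
    (hrank : ∀ i, (P i).rank = 1)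
    (hsic : ∀ i j, (P i * P j).trace =
      ((d : ℂ) * (if i = j then 1 else 0) + 1) / ((d : ℂ) + 1))
    (ρ : Matrix (Fin d) (Fin d) ℂ) (hρ : ρ.IsHermitian) (htr : ρ.trace = 1)
    (p : Fin (d ^ 2) → ℝ) (hp : ∀ i, (p i : ℂ) = (ρ * P i).trace / d) :
    ρ = ∑ i, (((((d : ℝ) + 1) * p i - 1 / d) : ℝ) : ℂ) • P i :=
  sic_representation_general d hd P hproj hsic ρ htr p hp
end

section
/- Let {Π_i}_{i=1}^{d²} be a SIC in dimension d ≥ 2, and let ρ₁, ρ₂ be Hermitian d×d complex matrices with Tr(ρ₁) = Tr(ρ₂) = 1, with SIC probabilities p₁(i) = Tr(ρ₁Π_i)/d and p₂(i) = Tr(ρ₂Π_i)/d. Then Tr(ρ₁ρ₂) = d(d+1)·Σ_{i=1}^{d²} p₁(i)p₂(i) − 1. -/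
lemma trace_comb_mul {d n : ℕ} (c : Fin n → ℂ) (P : Fin n → Matrix (Fin d) (Fin d) ℂ)
    (X : Matrix (Fin d) (Fin d) ℂ) :
    ((∑ i, c i • P i) * X).trace = ∑ i, c i * (P i * X).trace := by
  rw [Matrix.sum_mul, Matrix.trace_sum]
  simp [Matrix.smul_mul]

/-- For a SIC {Π_i} in dimension d ≥ 2 and trace-one Hermitian matrices ρ₁, ρ₂ with
SIC probabilities p₁, p₂, one has Tr(ρ₁ρ₂) = d(d+1)·Σ_i p₁(i)p₂(i) − 1. -/
theorem sic_hilbert_schmidt_inner_product (d : ℕ) (hd : 2 ≤ d)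
    (P : Fin (d ^ 2) → Matrix (Fin d) (Fin d) ℂ)
    (hherm : ∀ i, (P i).IsHermitian)
    (hproj : ∀ i, P i * P i = P i)
    (hrank : ∀ i, (P i).rank = 1)
    (hsic : ∀ i j, (P i * P j).trace =
      ((d : ℂ) * (if i = j then 1 else 0) + 1) / ((d : ℂ) + 1))
    (ρ₁ ρ₂ : Matrix (Fin d) (Fin d) ℂ)
    (hρ₁ : ρ₁.IsHermitian) (hρ₂ : ρ₂.IsHermitian)
    (htr₁ : ρ₁.trace = 1) (htr₂ : ρ₂.trace = 1)
    (p₁ p₂ : Fin (d ^ 2) → ℝ)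
    (hp₁ : ∀ i, (p₁ i : ℂ) = (ρ₁ * P i).trace / d)
    (hp₂ : ∀ i, (p₂ i : ℂ) = (ρ₂ * P i).trace / d) :
    (ρ₁ * ρ₂).trace = (d : ℂ) * ((d : ℂ) + 1) * (∑ i, ((p₁ i * p₂ i : ℝ) : ℂ)) - 1 := by
  have hd0 : (d : ℂ) ≠ 0 := Nat.cast_ne_zero.mpr (by omega)
  have hd1 : (d : ℂ) + 1 ≠ 0 := by
    have : ((d + 1 : ℕ) : ℂ) ≠ 0 := Nat.cast_ne_zero.mpr (by omega)
    push_cast at this; exact this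
  -- trace of each projection is 1
  have trP : ∀ i, (P i).trace = 1 := by
    intro i
    have h := hsic i i
    rw [hproj i] at h
    simpa [div_self hd1] using h
  -- trace inner product of a linear combination against P k
  have gram : ∀ (c : Fin (d ^ 2) → ℂ) (k : Fin (d ^ 2)),
      ∑ i, c i * (P i * P k).trace = ((d : ℂ) * c k + ∑ i, c i) / ((d : ℂ) + 1) := by
    intro c k
    have h : ∀ i, c i * (P i * P k).trace
        = ((if i = k then (d : ℂ) * c i else 0) + c i) / ((d : ℂ) + 1) := by
      intro i
      rw [hsic i k]
      split <;> field_simp <;> ring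
    simp only [h]
    rw [← Finset.sum_div]
    congr 1
    rw [Finset.sum_add_distrib, Finset.sum_ite_eq' Finset.univ k (fun i => (d : ℂ) * c i)]
    simp
  -- linear independence of the P i
  have hli : LinearIndependent ℂ P := by
    rw [Fintype.linearIndependent_iff]
    intro g hg
    have key : ∀ k, (d : ℂ) * g k + ∑ i, g i = 0 := by
      intro k
      have h1 : ((∑ i, g i • P i) * P k).trace = 0 := by rw [hg]; simp
      rw [trace_comb_mul, gram] at h1
      exact (div_eq_zero_iff.mp h1).resolve_right hd1
    have hS : (∑ i, g i) = 0 := by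
      have h2 : ∑ k, ((d : ℂ) * g k + ∑ i, g i) = 0 := by simp [key]
      simp only [Finset.sum_add_distrib, Finset.sum_const, Finset.card_univ, Fintype.card_fin,
        ← Finset.mul_sum, nsmul_eq_mul] at h2
      have h3 : (∑ i, g i) * ((d : ℂ) + (d : ℂ) ^ 2) = 0 := by
        push_cast at h2 ⊢; linear_combination h2
      have h4 : (d : ℂ) + (d : ℂ) ^ 2 ≠ 0 := by
        have : ((d + d ^ 2 : ℕ) : ℂ) ≠ 0 := Nat.cast_ne_zero.mpr (by positivity)
        push_cast at this; exact this
      exact (mul_eq_zero.mp h3).resolve_right h4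
    intro i
    have hk := key i
    rw [hS, add_zero] at hk
    exact (mul_eq_zero.mp hk).resolve_left hd0
  -- the P i form a basis; represent any matrix
  have hcard : Fintype.card (Fin (d ^ 2)) = Module.finrank ℂ (Matrix (Fin d) (Fin d) ℂ) := by
    rw [Module.finrank_matrix]
    simp [pow_two]
  have hne : Nonempty (Fin (d ^ 2)) := ⟨⟨0, by positivity⟩⟩
  have rep : ∀ ρ : Matrix (Fin d) (Fin d) ℂ, ∃ c : Fin (d ^ 2) → ℂ, ρ = ∑ i, c i • P i := by
    intro ρ
    let b := basisOfLinearIndependentOfCardEqFinrank hli hcard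
    refine ⟨b.repr ρ, ?_⟩
    have hb : ⇑b = P := coe_basisOfLinearIndependentOfCardEqFinrank hli hcard
    conv_lhs => rw [← b.sum_repr ρ]
    rw [hb]
  obtain ⟨c, hc⟩ := rep ρ₁
  obtain ⟨c', hc'⟩ := rep ρ₂
  -- sums of coefficients equal the traces, which are 1
  have sum_coeff : ∀ (ρ : Matrix (Fin d) (Fin d) ℂ) (a : Fin (d ^ 2) → ℂ),
      ρ = ∑ i, a i • P i → ρ.trace = ∑ i, a i := by
    intro ρ a ha
    rw [ha, Matrix.trace_sum]
    simp [Matrix.trace_smul, trP, smul_eq_mul]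
  have hSc : (∑ i, c i) = 1 := by rw [← sum_coeff ρ₁ c hc, htr₁]
  have hSc' : (∑ i, c' i) = 1 := by rw [← sum_coeff ρ₂ c' hc', htr₂]
  -- trace inner products with P k in terms of the probabilities
  have htrP₁ : ∀ k, (ρ₁ * P k).trace = (d : ℂ) * p₁ k := by
    intro k
    have h := (hp₁ k).symm
    rw [div_eq_iff hd0] at h
    rw [h]; ring
  have htrP₂ : ∀ k, (ρ₂ * P k).trace = (d : ℂ) * p₂ k := by
    intro k
    have h := (hp₂ k).symm
    rw [div_eq_iff hd0] at h
    rw [h]; ring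
  -- the coefficients of ρ₁ in terms of p₁
  have hck : ∀ k, (d : ℂ) * c k = ((d : ℂ) + 1) * ((d : ℂ) * p₁ k) - 1 := by
    intro k
    have h1 : ((d : ℂ) * c k + 1) / ((d : ℂ) + 1) = (d : ℂ) * p₁ k := by
      rw [← htrP₁ k, hc, trace_comb_mul, gram, hSc]
    rw [div_eq_iff hd1] at h1
    linear_combination h1
  -- the probabilities p₂ sum to 1
  have hSp₂ : ∑ i, (p₂ i : ℂ) = 1 := by
    have h1 : ∀ k, (d : ℂ) * p₂ k = ((d : ℂ) * c' k + 1) / ((d : ℂ) + 1) := by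
      intro k
      rw [← htrP₂ k, hc', trace_comb_mul, gram, hSc']
    have h2 : (d : ℂ) * ∑ i, (p₂ i : ℂ) = ((d : ℂ) * 1 + (d ^ 2 : ℕ)) / ((d : ℂ) + 1) := by
      rw [Finset.mul_sum]
      simp only [h1]
      rw [← Finset.sum_div]
      congr 1
      rw [Finset.sum_add_distrib, ← Finset.mul_sum, hSc']
      simp
    have h3 : (d : ℂ) * ∑ i, (p₂ i : ℂ) = (d : ℂ) * 1 := by
      rw [h2, mul_one]
      push_cast
      field_simp
      ring
    exact mul_left_cancel₀ hd0 h3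
  -- final computation
  have hfin : (d : ℂ) * (ρ₁ * ρ₂).trace
      = (d : ℂ) * ((d : ℂ) * ((d : ℂ) + 1) * (∑ i, ((p₁ i * p₂ i : ℝ) : ℂ)) - 1) := by
    conv_lhs => rw [hc, trace_comb_mul, Finset.mul_sum]
    have hterm : ∀ k, (d : ℂ) * (c k * (P k * ρ₂).trace)
        = (d : ℂ) ^ 2 * ((d : ℂ) + 1) * ((p₁ k : ℂ) * (p₂ k : ℂ)) - (d : ℂ) * (p₂ k : ℂ) := by
      intro k
      rw [Matrix.trace_mul_comm, htrP₂ k]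
      linear_combination ((d : ℂ) * (p₂ k : ℂ)) * hck k
    simp only [hterm]
    rw [Finset.sum_sub_distrib, ← Finset.mul_sum, ← Finset.mul_sum, hSp₂]
    push_cast
    ring
  exact mul_left_cancel₀ hd0 hfin
end

section
/- Let {Π_i}_{i=1}^{d²} and {Π'_i}_{i=1}^{d²} be two SICs in dimension d ≥ 2, and let R be a real d²×d² matrix such that Π'_i = Σ_{j=1}^{d²} R_ij·Π_j for all i. Then R is orthogonal: Σ_{k=1}^{d²} R_ik·R_jk = δ_ij for all i, j. -/
/-!
Expanding `Π'ᵢ = ∑ₖ Rᵢₖ Πₖ` against the SIC overlaps `Tr(Πₖ Πₗ) = (d δₖₗ + 1)/(d + 1)` gives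
`Tr(Π'ᵢ Π'ⱼ) = (d (R Rᵀ)ᵢⱼ + sᵢ sⱼ)/(d + 1)` with row sums `sᵢ = ∑ₖ Rᵢₖ`. Every member of a SIC
has trace `Tr Πₖ = Tr(Πₖ²) = 1`, so taking traces of `Π'ᵢ = ∑ₖ Rᵢₖ Πₖ` gives `sᵢ = 1`, and comparing with
`Tr(Π'ᵢ Π'ⱼ) = (d δᵢⱼ + 1)/(d + 1)` leaves `R Rᵀ = 1`.
-/

open Matrix Finset

variable {n ι K : Type*} [Fintype n]

lemma trace_sum_smul [Fintype ι] [CommSemiring K] (P : ι → Matrix n n K) (a : ι → K) :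
    (∑ k, a k • P k).trace = ∑ k, a k * (P k).trace := by
  simp only [trace_sum, trace_smul, smul_eq_mul]

lemma trace_sum_smul_mul_sum_smul [Fintype ι] [CommSemiring K] (P : ι → Matrix n n K)
    (a b : ι → K) :
    ((∑ k, a k • P k) * ∑ l, b l • P l).trace = ∑ k, ∑ l, a k * b l * (P k * P l).trace := by
  simp only [Finset.sum_mul_sum, trace_sum, smul_mul_smul, trace_smul, smul_eq_mul]

lemma sum_sum_mul_mul_ite_add_one [Fintype ι] [CommRing K] [DecidableEq ι] (c : K)
    (a b : ι → K) :
    ∑ k, ∑ l, a k * b l * (c * (if k = l then 1 else 0) + 1) =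
      c * ∑ k, a k * b k + (∑ k, a k) * ∑ l, b l := by
  rw [Finset.sum_mul_sum, Finset.mul_sum, ← Finset.sum_add_distrib]
  refine Finset.sum_congr rfl fun k _ => ?_
  simp only [mul_add, mul_one, Finset.sum_add_distrib, mul_ite, mul_zero, Finset.sum_ite_eq,
    Finset.mem_univ, if_true]
  ring

section SIC

variable [Field K] [DecidableEq ι] {d : ℕ} {P : ι → Matrix n n K}

lemma trace_eq_one_of_sic [CharZero K] (hproj : ∀ i, P i * P i = P i)
    (hsic : ∀ i j, (P i * P j).trace = ((d : K) * (if i = j then 1 else 0) + 1) / ((d : K) + 1))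
    (i : ι) : (P i).trace = 1 := by
  rw [← hproj i, hsic i i, if_pos rfl, mul_one, div_self (Nat.cast_add_one_ne_zero d)]

lemma trace_mul_of_sic [Fintype ι]
    (hsic : ∀ i j, (P i * P j).trace = ((d : K) * (if i = j then 1 else 0) + 1) / ((d : K) + 1))
    {a b : ι → K} (ha : ∑ k, a k = 1) (hb : ∑ k, b k = 1) :
    ((∑ k, a k • P k) * ∑ l, b l • P l).trace =
      ((d : K) * ∑ k, a k * b k + 1) / ((d : K) + 1) := by
  simp_rw [trace_sum_smul_mul_sum_smul, hsic, ← mul_div_assoc, ← Finset.sum_div]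
  rw [sum_sum_mul_mul_ite_add_one, ha, hb, mul_one]

end SIC

theorem sic_transition_orthogonal_general (d : ℕ)
    (P P' : Fin (d ^ 2) → Matrix (Fin d) (Fin d) ℂ)
    (hproj : ∀ i, P i * P i = P i)
    (hsic : ∀ i j, (P i * P j).trace =
      ((d : ℂ) * (if i = j then 1 else 0) + 1) / ((d : ℂ) + 1))
    (hproj' : ∀ i, P' i * P' i = P' i)
    (hsic' : ∀ i j, (P' i * P' j).trace =
      ((d : ℂ) * (if i = j then 1 else 0) + 1) / ((d : ℂ) + 1))
    (R : Matrix (Fin (d ^ 2)) (Fin (d ^ 2)) ℝ)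
    (hR : ∀ i, P' i = ∑ j, ((R i j : ℝ) : ℂ) • P j) :
    ∀ i j, ∑ k, R i k * R j k = if i = j then 1 else 0 := by
  intro i j
  have hd : (d : ℂ) ≠ 0 := by
    have : d ^ 2 ≠ 0 := Fin.pos i |>.ne'
    exact_mod_cast pow_ne_zero_iff two_ne_zero |>.mp this
  have hrow (i) : ∑ k, ((R i k : ℝ) : ℂ) = 1 := by
    simpa only [hR, trace_sum_smul, trace_eq_one_of_sic hproj hsic, mul_one]
      using trace_eq_one_of_sic hproj' hsic' i
  have key := hsic' i j
  rw [hR i, hR j, trace_mul_of_sic hsic (hrow i) (hrow j),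
    div_left_inj' (Nat.cast_add_one_ne_zero d), add_left_inj, mul_right_inj' hd] at key
  split_ifs at key ⊢ <;> exact_mod_cast key

/-- If two SICs in dimension d ≥ 2 are related by a real matrix R via
Π'_i = Σ_j R_ij·Π_j, then R is orthogonal: Σ_k R_ik R_jk = δ_ij. -/
theorem sic_transition_orthogonal (d : ℕ) (hd : 2 ≤ d)
    (P P' : Fin (d ^ 2) → Matrix (Fin d) (Fin d) ℂ)
    (hherm : ∀ i, (P i).IsHermitian)
    (hproj : ∀ i, P i * P i = P i)
    (hrank : ∀ i, (P i).rank = 1)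
    (hsic : ∀ i j, (P i * P j).trace =
      ((d : ℂ) * (if i = j then 1 else 0) + 1) / ((d : ℂ) + 1))
    (hherm' : ∀ i, (P' i).IsHermitian)
    (hproj' : ∀ i, P' i * P' i = P' i)
    (hrank' : ∀ i, (P' i).rank = 1)
    (hsic' : ∀ i j, (P' i * P' j).trace =
      ((d : ℂ) * (if i = j then 1 else 0) + 1) / ((d : ℂ) + 1))
    (R : Matrix (Fin (d ^ 2)) (Fin (d ^ 2)) ℝ)
    (hR : ∀ i, P' i = ∑ j, ((R i j : ℝ) : ℂ) • P j) :
    ∀ i j, ∑ k, R i k * R j k = if i = j then 1 else 0 :=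
  sic_transition_orthogonal_general d P P' hproj hsic hproj' hsic' R hR
end

section
/- Let X, Z ∈ M_3(ℂ) be given by X·e_j = e_{j+1 mod 3} and Z·e_j = ω^j·e_j with ω = e^{2πi/3}, and for t ∈ ℝ let ψ_t = (0, 1, −e^{2it})/√2 ∈ ℂ³. Then ψ_t is a unit vector, and for every (m, n) ∈ (ℤ/3ℤ)² with (m, n) ≠ (0, 0), |⟨ψ_t, X^m Z^n ψ_t⟩|² = 1/4. Consequently, the nine projections Π_{(m,n)} onto the vectors X^m Z^n ψ_t form a SIC in dimension 3: Tr(Π_a Π_b) = (3·δ_ab + 1)/4 for all a, b ∈ (ℤ/3ℤ)². -/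
open Matrix

/-- ω = e^{2πi/3}. -/
noncomputable def ω : ℂ := Complex.exp (2 * Real.pi * Complex.I / 3)

/-- The shift matrix X on ℂ³: X·e_j = e_{j+1 mod 3}. -/
def Xmat : Matrix (Fin 3) (Fin 3) ℂ :=
  Matrix.of fun i j => if i = j + 1 then 1 else 0

/-- The phase matrix Z on ℂ³: Z·e_j = ω^j·e_j. -/
noncomputable def Zmat : Matrix (Fin 3) (Fin 3) ℂ :=
  Matrix.diagonal fun j => ω ^ (j : ℕ)

/-- The fiducial vector ψ_t = (0, 1, −e^{2it})/√2. -/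
noncomputable def ψ (t : ℝ) : Fin 3 → ℂ :=
  fun i => (Real.sqrt 2 : ℂ)⁻¹ * ![0, 1, -Complex.exp (2 * t * Complex.I)] i

/-- The Weyl-Heisenberg orbit vectors X^m Z^n ψ_t. -/
noncomputable def sicVec (t : ℝ) (a : ZMod 3 × ZMod 3) : Fin 3 → ℂ :=
  (Xmat ^ a.1.val * Zmat ^ a.2.val).mulVec (ψ t)

/-- The projections onto the Weyl-Heisenberg orbit vectors. -/
noncomputable def sicProj (t : ℝ) (a : ZMod 3 × ZMod 3) : Matrix (Fin 3) (Fin 3) ℂ :=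
  Matrix.vecMulVec (sicVec t a) (star (sicVec t a))

/-!
The Weyl operators `W (m, n) = X^m Z^n` are unitary and satisfy `Z X = ω X Z`, so `W_aᴴ W_b` is a
power of `ω` times `W (b - a)`. Every overlap `|⟨W_a ψ, W_b ψ⟩|²` is therefore an overlap
`|⟨ψ, W_c ψ⟩|²` with `c = b - a`. Writing `ψ = (0, 1, -u)/√2` with `|u| = 1`, this equals
`|ω^n + ω^{2n}|²/4 = 1/4` when `c = (0, n)` with `n ≠ 0`, and `|u|²/4 = 1/4` when the
`X`-degree is nonzero. Finally `Tr(Π_x Π_y) = |⟨x, y⟩|²` for the projections onto unit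
vectors `x`, `y`.
-/

theorem pow_mul_pow_eq_smul_of_mul_eq_smul {R A : Type*} [CommSemiring R] [Semiring A]
    [Algebra R A] {x z : A} {c : R} (h : z * x = c • (x * z)) (i j : ℕ) :
    z ^ j * x ^ i = c ^ (i * j) • (x ^ i * z ^ j) := by
  have hi : ∀ i : ℕ, z * x ^ i = c ^ i • (x ^ i * z) := by
    intro i
    induction i with
    | zero => simp
    | succ i ih =>
      rw [pow_succ, ← mul_assoc, ih, smul_mul_assoc, mul_assoc, h, mul_smul_comm, smul_smul,
        ← mul_assoc, ← pow_succ, ← pow_succ]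
  induction j with
  | zero => simp
  | succ j ih =>
    rw [pow_succ, mul_assoc, hi, mul_smul_comm, ← mul_assoc, ih, smul_mul_assoc, smul_smul,
      mul_assoc, ← pow_succ, ← pow_add]
    ring_nf

theorem Matrix.star_mulVec_dotProduct_mulVec {m n α : Type*} [Fintype m] [Fintype n]
    [NonUnitalSemiring α] [StarRing α] (A : Matrix m n α) (B : Matrix m n α) (v w : n → α) :
    star (A *ᵥ v) ⬝ᵥ B *ᵥ w = star v ⬝ᵥ (Aᴴ * B) *ᵥ w := by
  rw [star_mulVec, ← dotProduct_mulVec, mulVec_mulVec]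

theorem Matrix.isHermitian_vecMulVec_star {n α : Type*} [Mul α] [StarMul α] (x : n → α) :
    (vecMulVec x (star x)).IsHermitian := by
  rw [IsHermitian, conjTranspose_vecMulVec, star_star]

theorem Matrix.vecMulVec_star_mul_self {n α : Type*} [Fintype n] [Semiring α] [Star α]
    {x : n → α} (hx : star x ⬝ᵥ x = 1) :
    vecMulVec x (star x) * vecMulVec x (star x) = vecMulVec x (star x) := by
  rw [vecMulVec_mul_vecMulVec, hx, one_smul]

theorem Matrix.rank_pos_of_ne_zero {m n K : Type*} [Fintype n] [Field K] {A : Matrix m n K}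
    (hA : A ≠ 0) : 0 < A.rank := by
  classical
  rwa [rank, Nat.pos_iff_ne_zero, Ne, Submodule.finrank_eq_zero, LinearMap.range_eq_bot,
    ← toLin'_apply', map_eq_zero_iff _ toLin'.injective]

theorem Matrix.rank_vecMulVec_of_ne_zero {m n K : Type*} [Fintype n] [Field K] {w : m → K}
    {v : n → K} (hw : w ≠ 0) (hv : v ≠ 0) : (vecMulVec w v).rank = 1 :=
  le_antisymm (rank_vecMulVec_le w v) <| rank_pos_of_ne_zero fun h => by
    obtain ⟨i, hi⟩ := Function.ne_iff.mp hw
    obtain ⟨j, hj⟩ := Function.ne_iff.mp hv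
    exact mul_ne_zero hi hj congr($h i j)

theorem Matrix.trace_vecMulVec_star_mul_vecMulVec_star {n : Type*} [Fintype n] (x y : n → ℂ) :
    (vecMulVec x (star x) * vecMulVec y (star y)).trace = Complex.normSq (star x ⬝ᵥ y) := by
  rw [vecMulVec_mul_vecMulVec, trace_vecMulVec, dotProduct_smul, smul_eq_mul,
    dotProduct_comm x, star_dotProduct y x, Complex.star_def, Complex.mul_conj]

lemma ZMod.val_sub_eq_two_mul_val_add_val_mod_three (a b : ZMod 3) :
    (b - a).val = (2 * a.val + b.val) % 3 := by
  revert a b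
  decide

lemma ω_isPrimitiveRoot : IsPrimitiveRoot ω 3 := by
  simpa [ω] using Complex.isPrimitiveRoot_exp 3 (by norm_num)

lemma ω_pow_three : ω ^ 3 = 1 := ω_isPrimitiveRoot.pow_eq_one

lemma norm_ω : ‖ω‖ = 1 := ω_isPrimitiveRoot.norm'_eq_one (by norm_num)

lemma ω_sq_add_ω_add_one : ω ^ 2 + ω + 1 = 0 := by
  have h := ω_isPrimitiveRoot.geom_sum_eq_zero (by norm_num)
  simp only [Finset.sum_range_succ, Finset.sum_range_zero, pow_zero, pow_one] at h
  linear_combination h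

lemma star_ω : star ω = ω ^ 2 := by
  rw [Complex.star_def, ← Complex.inv_eq_conj norm_ω, inv_eq_of_mul_eq_one_right]
  rw [← pow_succ', ω_pow_three]

lemma Xmat_mulVec (v : Fin 3 → ℂ) : Xmat *ᵥ v = ![v 2, v 0, v 1] := by
  ext i
  fin_cases i <;> simp [Xmat, mulVec, dotProduct, Fin.sum_univ_three]

lemma Zmat_pow_mulVec (n : ℕ) (v : Fin 3 → ℂ) :
    Zmat ^ n *ᵥ v = ![v 0, ω ^ n * v 1, ω ^ (2 * n) * v 2] := by
  ext i
  fin_cases i <;> simp [Zmat, diagonal_pow, mulVec_diagonal, ← pow_mul]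

lemma Xmat_pow_three : Xmat ^ 3 = 1 := by
  ext i j
  fin_cases i <;> fin_cases j <;> simp [Xmat, pow_succ, mul_apply, one_apply]

lemma Zmat_pow_three : Zmat ^ 3 = 1 := by
  rw [Zmat, diagonal_pow, ← diagonal_one]
  congr 1
  funext j
  rw [Pi.pow_apply, ← pow_mul, mul_comm, pow_mul, ω_pow_three, one_pow]

lemma Xmat_conjTranspose : Xmatᴴ = Xmat ^ 2 := by
  ext i j
  fin_cases i <;> fin_cases j <;> simp [Xmat, sq, mul_apply]

lemma Zmat_conjTranspose : Zmatᴴ = Zmat ^ 2 := by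
  simp [Zmat, diagonal_pow, star_ω, ← pow_mul, mul_comm]

lemma Zmat_mul_Xmat : Zmat * Xmat = ω • (Xmat * Zmat) := by
  ext i j
  fin_cases i <;> fin_cases j <;>
    simp [Zmat, Xmat, mul_apply, Fin.sum_univ_three, ← sq, ← pow_succ', ω_pow_three]

noncomputable def weyl (a : ZMod 3 × ZMod 3) : Matrix (Fin 3) (Fin 3) ℂ :=
  Xmat ^ a.1.val * Zmat ^ a.2.val

lemma weyl_mem_unitaryGroup (a : ZMod 3 × ZMod 3) : weyl a ∈ unitaryGroup (Fin 3) ℂ := by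
  have hX : Xmat ∈ unitaryGroup (Fin 3) ℂ := by
    rw [mem_unitaryGroup_iff', star_eq_conjTranspose, Xmat_conjTranspose, ← pow_succ,
      Xmat_pow_three]
  have hZ : Zmat ∈ unitaryGroup (Fin 3) ℂ := by
    rw [mem_unitaryGroup_iff', star_eq_conjTranspose, Zmat_conjTranspose, ← pow_succ,
      Zmat_pow_three]
  exact mul_mem (pow_mem hX _) (pow_mem hZ _)

lemma weyl_conjTranspose_mul_weyl (a b : ZMod 3 × ZMod 3) :
    ∃ k : ℕ, (weyl a)ᴴ * weyl b = ω ^ k • weyl (b - a) := by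
  obtain ⟨p, q⟩ := a
  obtain ⟨r, s⟩ := b
  refine ⟨(2 * p.val + r.val) * (2 * q.val), ?_⟩
  calc (weyl (p, q))ᴴ * weyl (r, s)
      = Zmat ^ (2 * q.val) * Xmat ^ (2 * p.val + r.val) * Zmat ^ s.val := by
        simp only [weyl, conjTranspose_mul, conjTranspose_pow, Xmat_conjTranspose,
          Zmat_conjTranspose, ← pow_mul, pow_add, mul_assoc]
    _ = ω ^ ((2 * p.val + r.val) * (2 * q.val)) •
          (Xmat ^ (2 * p.val + r.val) * Zmat ^ (2 * q.val + s.val)) := by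
        rw [pow_mul_pow_eq_smul_of_mul_eq_smul Zmat_mul_Xmat, smul_mul_assoc, mul_assoc,
          ← pow_add]
    _ = _ := by
        rw [weyl, Prod.fst_sub, Prod.snd_sub, ZMod.val_sub_eq_two_mul_val_add_val_mod_three,
          ZMod.val_sub_eq_two_mul_val_add_val_mod_three, ← pow_eq_pow_mod _ Xmat_pow_three,
          ← pow_eq_pow_mod _ Zmat_pow_three]

lemma sicVec_eq_weyl_mulVec (t : ℝ) (a : ZMod 3 × ZMod 3) : sicVec t a = weyl a *ᵥ ψ t := rfl

lemma normSq_star_sicVec_dotProduct_sicVec (t : ℝ) (a b : ZMod 3 × ZMod 3) :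
    Complex.normSq (star (sicVec t a) ⬝ᵥ sicVec t b) =
      Complex.normSq (star (ψ t) ⬝ᵥ sicVec t (b - a)) := by
  obtain ⟨k, hk⟩ := weyl_conjTranspose_mul_weyl a b
  rw [sicVec_eq_weyl_mulVec, sicVec_eq_weyl_mulVec, star_mulVec_dotProduct_mulVec, hk,
    smul_mulVec, dotProduct_smul, smul_eq_mul, map_mul, map_pow, Complex.normSq_eq_norm_sq ω,
    norm_ω, one_pow, one_pow, one_mul, sicVec_eq_weyl_mulVec]

lemma star_dotProduct_Zmat_pow_mulVec {u : ℂ} (hu : ‖u‖ = 1) (n : ℕ) :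
    star ![0, 1, -u] ⬝ᵥ Zmat ^ n *ᵥ ![0, 1, -u] = ω ^ n + ω ^ (2 * n) := by
  have hu' : starRingEnd ℂ u * u = 1 := by
    rw [Complex.conj_mul', hu]; norm_num
  simp [Zmat_pow_mulVec, dotProduct, Fin.sum_univ_three, mul_left_comm _ (ω ^ _), hu']

lemma star_dotProduct_Xmat_mul_Zmat_pow_mulVec (u : ℂ) (n : ℕ) :
    star ![0, 1, -u] ⬝ᵥ (Xmat * Zmat ^ n) *ᵥ ![0, 1, -u] = -(star u * ω ^ n) := by
  simp [← mulVec_mulVec, Xmat_mulVec, Zmat_pow_mulVec, dotProduct, Fin.sum_univ_three]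

lemma star_dotProduct_Xmat_sq_mul_Zmat_pow_mulVec (u : ℂ) (n : ℕ) :
    star ![0, 1, -u] ⬝ᵥ (Xmat ^ 2 * Zmat ^ n) *ᵥ ![0, 1, -u] = -(ω ^ (2 * n) * u) := by
  simp [sq, ← mulVec_mulVec, Xmat_mulVec, Zmat_pow_mulVec, dotProduct, Fin.sum_univ_three]

lemma normSq_star_dotProduct_weyl_mulVec {u : ℂ} (hu : ‖u‖ = 1) {c : ZMod 3 × ZMod 3}
    (hc : c ≠ 0) :
    Complex.normSq (star ![0, 1, -u] ⬝ᵥ weyl c *ᵥ ![0, 1, -u]) = 1 := by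
  obtain ⟨m, n⟩ := c
  have hm := ZMod.val_lt m
  interval_cases hmv : m.val
  · have hn : n.val ≠ 0 := fun hnv =>
      hc (Prod.ext ((ZMod.val_eq_zero m).mp hmv) ((ZMod.val_eq_zero n).mp hnv))
    have hsum : ω ^ n.val + ω ^ (2 * n.val) = -1 := by
      obtain hn | hn : n.val = 1 ∨ n.val = 2 := by have := ZMod.val_lt n; omega
      · rw [hn]; linear_combination ω_sq_add_ω_add_one
      · rw [hn]; linear_combination ω_sq_add_ω_add_one + ω * ω_pow_three
    simp [weyl, hmv, star_dotProduct_Zmat_pow_mulVec hu, hsum]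
  · simp [weyl, hmv, star_dotProduct_Xmat_mul_Zmat_pow_mulVec, Complex.normSq_eq_norm_sq, hu,
      norm_ω]
  · simp [weyl, hmv, star_dotProduct_Xmat_sq_mul_Zmat_pow_mulVec, Complex.normSq_eq_norm_sq, hu,
      norm_ω]

lemma ψ_eq_smul (t : ℝ) :
    ψ t = (Real.sqrt 2 : ℂ)⁻¹ • ![0, 1, -Complex.exp (2 * t * Complex.I)] := rfl

lemma norm_exp_two_mul_I (t : ℝ) : ‖Complex.exp (2 * t * Complex.I)‖ = 1 := by
  simpa using Complex.norm_exp_ofReal_mul_I (2 * t)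

lemma star_ψ_dotProduct_mulVec (t : ℝ) (M : Matrix (Fin 3) (Fin 3) ℂ) :
    star (ψ t) ⬝ᵥ M *ᵥ ψ t =
      (star ![0, 1, -Complex.exp (2 * t * Complex.I)] ⬝ᵥ
        M *ᵥ ![0, 1, -Complex.exp (2 * t * Complex.I)]) / 2 := by
  have h : (Real.sqrt 2 : ℂ)⁻¹ * star (Real.sqrt 2 : ℂ)⁻¹ = 1 / 2 := by
    rw [star_inv₀, Complex.star_def, Complex.conj_ofReal, ← mul_inv, ← Complex.ofReal_mul,
      Real.mul_self_sqrt zero_le_two]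
    norm_num
  rw [ψ_eq_smul, star_smul, mulVec_smul, dotProduct_smul, smul_dotProduct, smul_eq_mul,
    smul_eq_mul, ← mul_assoc, h]
  ring

lemma star_ψ_dotProduct_ψ (t : ℝ) : star (ψ t) ⬝ᵥ ψ t = 1 := by
  nth_rw 2 [← one_mulVec (ψ t)]
  rw [star_ψ_dotProduct_mulVec, ← pow_zero Zmat,
    star_dotProduct_Zmat_pow_mulVec (norm_exp_two_mul_I t)]
  norm_num

lemma normSq_star_ψ_dotProduct_sicVec (t : ℝ) {c : ZMod 3 × ZMod 3} (hc : c ≠ 0) :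
    Complex.normSq (star (ψ t) ⬝ᵥ sicVec t c) = 1 / 4 := by
  rw [sicVec_eq_weyl_mulVec, star_ψ_dotProduct_mulVec, Complex.normSq_div,
    normSq_star_dotProduct_weyl_mulVec (norm_exp_two_mul_I t) hc]
  norm_num

lemma star_sicVec_dotProduct_sicVec_self (t : ℝ) (a : ZMod 3 × ZMod 3) :
    star (sicVec t a) ⬝ᵥ sicVec t a = 1 := by
  rw [sicVec_eq_weyl_mulVec, star_mulVec_dotProduct_mulVec, ← star_eq_conjTranspose,
    (mem_unitaryGroup_iff').mp (weyl_mem_unitaryGroup a), one_mulVec, star_ψ_dotProduct_ψ]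

/-- ψ_t is a unit vector, the overlaps |⟨ψ_t, X^m Z^n ψ_t⟩|² equal 1/4 for
(m,n) ≠ (0,0), and consequently the nine projections onto the vectors
X^m Z^n ψ_t form a SIC in dimension 3. -/
theorem weyl_heisenberg_qutrit_sic (t : ℝ) :
    (star (ψ t) ⬝ᵥ ψ t = 1) ∧
    (∀ m n : ZMod 3, (m, n) ≠ (0, 0) →
      Complex.normSq (star (ψ t) ⬝ᵥ sicVec t (m, n)) = 1 / 4) ∧
    (∀ a, (sicProj t a).IsHermitian) ∧
    (∀ a, sicProj t a * sicProj t a = sicProj t a) ∧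
    (∀ a, (sicProj t a).rank = 1) ∧
    (∀ a b : ZMod 3 × ZMod 3, (sicProj t a * sicProj t b).trace =
      (3 * (if a = b then 1 else 0) + 1) / 4) := by
  have hunit := star_sicVec_dotProduct_sicVec_self t
  have hne (a : ZMod 3 × ZMod 3) : sicVec t a ≠ 0 := fun h => by simpa [h] using hunit a
  refine ⟨star_ψ_dotProduct_ψ t, fun m n hmn => normSq_star_ψ_dotProduct_sicVec t hmn,
    fun a => isHermitian_vecMulVec_star _, fun a => vecMulVec_star_mul_self (hunit a),
    fun a => rank_vecMulVec_of_ne_zero (hne a) (star_ne_zero.mpr (hne a)), fun a b => ?_⟩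
  rw [sicProj, sicProj, trace_vecMulVec_star_mul_vecMulVec_star]
  split_ifs with hab
  · subst hab
    rw [hunit]
    norm_num
  · rw [normSq_star_sicVec_dotProduct_sicVec,
      normSq_star_ψ_dotProduct_sicVec t (sub_ne_zero.mpr (Ne.symm hab))]
    norm_num
end

section
/- Let α, β, γ ≥ 0 be real numbers with α + β + γ = 1 and (α, β, γ) ≠ (1/3, 1/3, 1/3). Set f₁ = α² + β² + γ² and f₂ = α³ + β³ + γ³. Then f₁ > 1/3, and the quantity F = √3·(2/9 − f₁ + f₂)/(f₁ − 1/3)^{3/2} satisfies −1/√2 ≤ F ≤ 1/√2. -/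
/-- For nonnegative reals α, β, γ with α + β + γ = 1, not all equal to 1/3, the
power sums f₁ = α² + β² + γ² and f₂ = α³ + β³ + γ³ satisfy f₁ > 1/3, and
F = √3·(2/9 − f₁ + f₂)/(f₁ − 1/3)^{3/2} satisfies −1/√2 ≤ F ≤ 1/√2. -/
theorem F_bounds (α β γ : ℝ) (hα : 0 ≤ α) (hβ : 0 ≤ β) (hγ : 0 ≤ γ)
    (hsum : α + β + γ = 1)
    (hne : (α, β, γ) ≠ (1 / 3, 1 / 3, 1 / 3)) :
    1 / 3 < α ^ 2 + β ^ 2 + γ ^ 2 ∧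
    -(1 / Real.sqrt 2) ≤
      Real.sqrt 3 * (2 / 9 - (α ^ 2 + β ^ 2 + γ ^ 2) + (α ^ 3 + β ^ 3 + γ ^ 3)) /
        (α ^ 2 + β ^ 2 + γ ^ 2 - 1 / 3) ^ ((3 : ℝ) / 2) ∧
    Real.sqrt 3 * (2 / 9 - (α ^ 2 + β ^ 2 + γ ^ 2) + (α ^ 3 + β ^ 3 + γ ^ 3)) /
        (α ^ 2 + β ^ 2 + γ ^ 2 - 1 / 3) ^ ((3 : ℝ) / 2) ≤ 1 / Real.sqrt 2 := by
  set s : ℝ := α ^ 2 + β ^ 2 + γ ^ 2 - 1 / 3 with hs_def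
  set N : ℝ := 2 / 9 - (α ^ 2 + β ^ 2 + γ ^ 2) + (α ^ 3 + β ^ 3 + γ ^ 3) with hN_def
  clear_value s N
  have hs_eq : s = (α - 1/3)^2 + (β - 1/3)^2 + (γ - 1/3)^2 := by
    rw [hs_def]; nlinarith [hsum]
  have hs0 : 0 < s := by
    rcases lt_or_eq_of_le (show (0:ℝ) ≤ s by rw [hs_eq]; positivity) with h | h
    · exact h
    · exfalso
      apply hne
      have h0 : (α - 1/3)^2 + (β - 1/3)^2 + (γ - 1/3)^2 = 0 := by rw [← hs_eq, ← h]
      have h1 : α = 1/3 := by nlinarith [sq_nonneg (α - 1/3), sq_nonneg (β - 1/3), sq_nonneg (γ - 1/3)]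
      have h2 : β = 1/3 := by nlinarith [sq_nonneg (α - 1/3), sq_nonneg (β - 1/3), sq_nonneg (γ - 1/3)]
      have h3 : γ = 1/3 := by nlinarith [sq_nonneg (α - 1/3), sq_nonneg (β - 1/3), sq_nonneg (γ - 1/3)]
      simp [h1, h2, h3]
  have key : 6 * N ^ 2 ≤ s ^ 3 := by
    have hγ' : γ = 1 - α - β := by linarith
    have hid : s ^ 3 - 6 * N ^ 2 = 2 * ((α - β) * (2*α + β - 1) * (α + 2*β - 1)) ^ 2 := by
      rw [hN_def, hs_def, hγ']; ring
    linarith [sq_nonneg ((α - β) * (2*α + β - 1) * (α + 2*β - 1))]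
  have hss : (0:ℝ) < Real.sqrt s := Real.sqrt_pos.mpr hs0
  have hpow : s ^ ((3:ℝ)/2) = s * Real.sqrt s := by
    rw [show ((3:ℝ)/2) = (1:ℝ)/2 * (3:ℕ) by norm_num, Real.rpow_mul hs0.le,
      ← Real.sqrt_eq_rpow, Real.rpow_natCast]
    rw [pow_succ, Real.sq_sqrt hs0.le, mul_comm]
  have hD : 0 < s * Real.sqrt s := by positivity
  have h2 : (0:ℝ) < Real.sqrt 2 := by positivity
  have habs : |Real.sqrt 3 * N| ≤ (s * Real.sqrt s) / Real.sqrt 2 := by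
    have hsq : (Real.sqrt 3 * N) ^ 2 ≤ ((s * Real.sqrt s) / Real.sqrt 2) ^ 2 := by
      rw [mul_pow, div_pow, mul_pow, Real.sq_sqrt (by norm_num : (0:ℝ) ≤ 3),
        Real.sq_sqrt (by norm_num : (0:ℝ) ≤ 2), Real.sq_sqrt hs0.le]
      rw [le_div_iff₀ (by norm_num : (0:ℝ) < 2)]
      have hr : s ^ 2 * s = s ^ 3 := by ring
      have hr2 : 3 * N ^ 2 * 2 = 6 * N ^ 2 := by ring
      linarith
    have := Real.sqrt_le_sqrt hsq
    rwa [Real.sqrt_sq_eq_abs, Real.sqrt_sq (div_nonneg hD.le h2.le)] at this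
  rw [hpow]
  have hlo := (abs_le.mp habs).1
  have hhi := (abs_le.mp habs).2
  refine ⟨by rw [hs_def] at hs0; linarith, ?_, ?_⟩
  · rw [le_div_iff₀ hD]
    calc -(1 / Real.sqrt 2) * (s * Real.sqrt s) = -((s * Real.sqrt s) / Real.sqrt 2) := by
          field_simp
      _ ≤ Real.sqrt 3 * N := hlo
  · rw [div_le_iff₀ hD]
    calc Real.sqrt 3 * N ≤ (s * Real.sqrt s) / Real.sqrt 2 := hhi
      _ = 1 / Real.sqrt 2 * (s * Real.sqrt s) := by field_simp
end
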